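/- arXiv:2503.12808 — 4 statements merged into one kernel-verified Lean document; each statement's English description precedes it below -/
import Mathlib

section
/- Let X be a finite set, let π and q* be probability mass functions on X, and fix a function N : X → ℕ (counts of symbols in an observed sequence). Suppose q̂ is a probability mass function on X such that q̂(x) depends only on N(x) (i.e., q̂ is a natural estimator), and define M̂_ζ = Σ_{x : N(x)=ζ} q̂(x) and M^π_ζ = Σ_{x : N(x)=ζ} π(x). If q* is also natural (q*(x) depends only on N(x)), then d_TV(π, q̂) ≤ 2·d_TV(π, q*) + d_TV(M̂, M^π), where d_TV between the vectors M̂ and M^π is half the ℓ1 distance of the sequences (M̂_ζ)_{ζ} and (M^π_ζ)_{ζ}, provided q̂ distributes M̂_ζ equally among symbols with N(x)=ζ. -/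
/-!
On a count class `{x | N x = ζ}` both `q*` and `q̂` are constant, so `|q* - q̂|` summed over
the class equals `|∑ (q* - q̂)|`, which by the triangle inequality through `π` is at most
`∑ |π - q*| + |M̂_ζ - M^π_ζ|`. Adding the triangle inequality `|π - q̂| ≤ |π - q*| + |q* - q̂|`
and summing over the classes gives the bound.
-/

open Finset

section

variable {ι G : Type*} [AddCommGroup G] [LinearOrder G] [IsOrderedAddMonoid G]

theorem Finset.sum_abs_eq_abs_sum_of_forall_eq {s : Finset ι} {f : ι → G} {c : G}
    (hf : ∀ x ∈ s, f x = c) : ∑ x ∈ s, |f x| = |∑ x ∈ s, f x| := by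
  rw [sum_congr rfl hf, sum_congr rfl fun x hx => by rw [hf x hx], sum_const, sum_const,
    abs_nsmul]

theorem Finset.sum_abs_sub_le_of_sub_eq_const {s : Finset ι} {p q q' : ι → G} {c : G}
    (hc : ∀ x ∈ s, q x - q' x = c) :
    ∑ x ∈ s, |p x - q' x| ≤
      2 • ∑ x ∈ s, |p x - q x| + |∑ x ∈ s, q' x - ∑ x ∈ s, p x| := by
  have h_split : ∑ x ∈ s, |p x - q' x| ≤ ∑ x ∈ s, |p x - q x| + ∑ x ∈ s, |q x - q' x| := by
    rw [← sum_add_distrib]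
    exact sum_le_sum fun x _ => abs_sub_le (p x) (q x) (q' x)
  have h_mass : |∑ x ∈ s, (q x - q' x)| ≤
      ∑ x ∈ s, |p x - q x| + |∑ x ∈ s, q' x - ∑ x ∈ s, p x| := by
    calc |∑ x ∈ s, (q x - q' x)|
        = |∑ x ∈ s, (q x - p x) + (∑ x ∈ s, p x - ∑ x ∈ s, q' x)| := by
          simp only [sum_sub_distrib]; abel_nf
      _ ≤ ∑ x ∈ s, |q x - p x| + |∑ x ∈ s, p x - ∑ x ∈ s, q' x| :=
          (abs_add_le _ _).trans (add_le_add_left (abs_sum_le_sum_abs _ _) _)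
      _ = ∑ x ∈ s, |p x - q x| + |∑ x ∈ s, q' x - ∑ x ∈ s, p x| := by
          simp only [abs_sub_comm]
  rw [sum_abs_eq_abs_sum_of_forall_eq hc] at h_split
  rw [two_nsmul, add_assoc]
  exact h_split.trans (add_le_add_right h_mass _)

end

theorem stmt0_general {X : Type*} [Fintype X]
    (π qstar qhat : X → ℝ) (N : X → ℕ)
    (hnat_star : ∀ x y, N x = N y → qstar x = qstar y)
    (hnat_hat : ∀ x y, N x = N y → qhat x = qhat y) :
    (1/2) * ∑ x, |π x - qhat x| ≤
      2 * ((1/2) * ∑ x, |π x - qstar x|) +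
      (1/2) * ∑ ζ ∈ Finset.image N univ,
        |(∑ x ∈ univ.filter (fun x => N x = ζ), qhat x) -
          (∑ x ∈ univ.filter (fun x => N x = ζ), π x)| := by
  have h_class : ∀ ζ ∈ image N univ,
      ∑ x ∈ univ.filter (fun x => N x = ζ), |π x - qhat x| ≤
        2 • ∑ x ∈ univ.filter (fun x => N x = ζ), |π x - qstar x| +
        |∑ x ∈ univ.filter (fun x => N x = ζ), qhat x -
          ∑ x ∈ univ.filter (fun x => N x = ζ), π x| := by
    intro ζ hζ
    obtain ⟨x₀, -, rfl⟩ := mem_image.1 hζ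
    refine sum_abs_sub_le_of_sub_eq_const (c := qstar x₀ - qhat x₀) fun x hx => ?_
    have hx : N x = N x₀ := (mem_filter.1 hx).2
    rw [hnat_star x x₀ hx, hnat_hat x x₀ hx]
  have h_maps : ∀ x ∈ (univ : Finset X), N x ∈ image N univ :=
    fun x _ => mem_image_of_mem N (mem_univ x)
  have h_total := sum_le_sum h_class
  rw [sum_fiberwise_of_maps_to h_maps, sum_add_distrib, ← smul_sum,
    sum_fiberwise_of_maps_to h_maps, two_nsmul] at h_total
  linarith

/-- Oracle inequality: if `qhat` is the natural estimator obtained by splitting its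
count masses equally among symbols of equal count, and `qstar` is any natural
distribution, then `d_TV(π, qhat) ≤ 2 d_TV(π, qstar) + d_TV(M̂, M^π)`. -/
theorem stmt0 {X : Type*} [Fintype X] [DecidableEq X]
    (π qstar qhat : X → ℝ) (N : X → ℕ)
    (hπ0 : ∀ x, 0 ≤ π x) (hπ1 : ∑ x, π x = 1)
    (hqs0 : ∀ x, 0 ≤ qstar x) (hqs1 : ∑ x, qstar x = 1)
    (hqh0 : ∀ x, 0 ≤ qhat x) (hqh1 : ∑ x, qhat x = 1)
    (hnat_star : ∀ x y, N x = N y → qstar x = qstar y)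
    (hnat_hat : ∀ x y, N x = N y → qhat x = qhat y)
    (hsplit : ∀ x : X,
      qhat x = (∑ y ∈ univ.filter (fun y => N y = N x), qhat y) /
        ((univ.filter (fun y => N y = N x)).card : ℝ)) :
    (1/2) * ∑ x, |π x - qhat x| ≤
      2 * ((1/2) * ∑ x, |π x - qstar x|) +
      (1/2) * ∑ ζ ∈ Finset.image N univ,
        |(∑ x ∈ univ.filter (fun x => N x = ζ), qhat x) -
          (∑ x ∈ univ.filter (fun x => N x = ζ), π x)| :=
  stmt0_general π qstar qhat N hnat_star hnat_hat
end

section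
/- Let φ : {0,1,…,n} → ℕ satisfy Σ_{ζ=0}^{n} ζ·φ(ζ) = n and let ζ̄ < n be a natural number. Then Σ_{ζ=ζ̄+1}^{n} φ(ζ)·√ζ ≤ n/√(ζ̄+1). -/
/-! On the tail `ζ ≥ ζ̄ + 1` each weight satisfies `√ζ = ζ / √ζ ≤ ζ / √(ζ̄ + 1)`, so the tail sum of
`φ(ζ)√ζ` is at most `(Σ ζ φ(ζ)) / √(ζ̄ + 1) ≤ n / √(ζ̄ + 1)`. -/

open Finset Real

theorem Real.sqrt_le_div_sqrt_of_le {a x : ℝ} (ha : 0 < a) (hax : a ≤ x) : √x ≤ x / √a := by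
  rw [← Real.div_sqrt]
  exact div_le_div_of_nonneg_left (ha.le.trans hax) (sqrt_pos.2 ha) (sqrt_le_sqrt hax)

theorem Finset.sum_mul_sqrt_le_sum_mul_div_sqrt {ι : Type*} (s : Finset ι) (w f : ι → ℝ)
    (hw : ∀ i ∈ s, 0 ≤ w i) {a : ℝ} (ha : 0 < a) (hf : ∀ i ∈ s, a ≤ f i) :
    ∑ i ∈ s, w i * √(f i) ≤ (∑ i ∈ s, f i * w i) / √a := by
  rw [sum_div]
  refine sum_le_sum fun i hi => ?_
  calc w i * √(f i) ≤ w i * (f i / √a) :=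
        mul_le_mul_of_nonneg_left (sqrt_le_div_sqrt_of_le ha (hf i hi)) (hw i hi)
    _ = f i * w i / √a := by ring

theorem stmt4_general (n : ℕ) (φ : ℕ → ℕ) (ζb : ℕ)
    (htot : ∑ ζ ∈ Finset.range (n+1), ζ * φ ζ = n) :
    (∑ ζ ∈ Finset.Icc (ζb+1) n, (φ ζ : ℝ) * Real.sqrt ζ)
      ≤ (n : ℝ) / Real.sqrt (ζb + 1) := by
  have htail : ∑ ζ ∈ Icc (ζb + 1) n, (ζ : ℝ) * φ ζ ≤ n := by
    calc ∑ ζ ∈ Icc (ζb + 1) n, (ζ : ℝ) * φ ζ ≤ ∑ ζ ∈ range (n + 1), (ζ : ℝ) * φ ζ :=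
          sum_le_sum_of_subset_of_nonneg
            (fun ζ hζ => mem_range.2 (Nat.lt_succ_of_le (mem_Icc.1 hζ).2))
            (fun _ _ _ => by positivity)
      _ = n := by exact_mod_cast htot
  calc (∑ ζ ∈ Icc (ζb + 1) n, (φ ζ : ℝ) * √ζ)
      ≤ (∑ ζ ∈ Icc (ζb + 1) n, (ζ : ℝ) * φ ζ) / √(ζb + 1) :=
        sum_mul_sqrt_le_sum_mul_div_sqrt _ _ _ (fun _ _ => by positivity) (by positivity)
          fun ζ hζ => by exact_mod_cast (mem_Icc.1 hζ).1
    _ ≤ n / √(ζb + 1) := by gcongr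

/-- Tail-count bound with square roots:
`Σ_{ζ > ζ̄} φ(ζ)√ζ ≤ n/√(ζ̄+1)` when `Σ ζ φ(ζ) = n`. -/
theorem stmt4 (n : ℕ) (φ : ℕ → ℕ) (ζb : ℕ) (hζ : ζb < n)
    (htot : ∑ ζ ∈ Finset.range (n+1), ζ * φ ζ = n) :
    (∑ ζ ∈ Finset.Icc (ζb+1) n, (φ ζ : ℝ) * Real.sqrt ζ)
      ≤ (n : ℝ) / Real.sqrt (ζb + 1) :=
  stmt4_general n φ ζb htot
end

section
/- Let a finite index set [n] be partitioned into n₀ disjoint blocks B₁,…,B_{n₀}; for each j let H_j = [n] \ B_j. Let (X_i)_{i∈[n]} take values in 𝒳, fix x ∈ 𝒳 and ζ ∈ ℕ, and write N(x) = #{i: X_i = x}, N_S(x) = #{i ∈ S: X_i = x}. Then Σ_{j=1}^{n₀} 1{N_{H_j}(x) = ζ} ≤ Σ_{u=1}^{2τ−1} 1{N(x) = ζ+u}·(ζ+u)/u + n₀·1{N(x) = ζ}, where each block has size at most 2τ−1 (so N_{B_j}(x) ≤ 2τ−1 for all j). -/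
open Finset

/-- Adaptive bound on `Σ_j 1{N_{H_j}(x) = ζ}` for holes of a block partition with
blocks of size at most `2τ−1`. -/
theorem stmt11 {ι 𝒳 : Type*} [Fintype ι] [DecidableEq ι] [DecidableEq 𝒳]
    (n₀ τ : ℕ) (hτ : 1 ≤ τ) (B : Fin n₀ → Finset ι)
    (hdisj : ∀ j k, j ≠ k → Disjoint (B j) (B k))
    (hcover : ∀ i : ι, ∃ j, i ∈ B j)
    (hsize : ∀ j, (B j).card ≤ 2 * τ - 1)
    (Xs : ι → 𝒳) (x : 𝒳) (ζ : ℕ) :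
    (∑ j : Fin n₀,
        (if ((univ \ B j).filter (fun i => Xs i = x)).card = ζ then (1:ℝ) else 0))
      ≤ (∑ u ∈ Finset.Icc 1 (2 * τ - 1),
          (if (univ.filter (fun i => Xs i = x)).card = ζ + u then (1:ℝ) else 0) *
            ((ζ + u : ℝ) / u))
        + (n₀ : ℝ) *
          (if (univ.filter (fun i => Xs i = x)).card = ζ then (1:ℝ) else 0) := by
  classical
  set N := (univ.filter (fun i => Xs i = x)).card with hN
  set f : Fin n₀ → ℕ := fun j => ((B j).filter (fun i => Xs i = x)).card with hf
  have hsum : ∑ j, f j = N := by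
    have hbu : (univ : Finset (Fin n₀)).biUnion B = (univ : Finset ι) := by
      ext i; simp only [mem_biUnion, mem_univ, true_and, iff_true]
      exact hcover i
    rw [hN, ← hbu, filter_biUnion, card_biUnion]
    intro j _ k _ hjk
    exact (hdisj j k hjk).mono (filter_subset _ _) (filter_subset _ _)
  have hsplit : ∀ j, ((univ \ B j).filter (fun i => Xs i = x)).card + f j = N := by
    intro j
    rw [hN, hf, ← card_union_of_disjoint (disjoint_filter_filter sdiff_disjoint),
      ← filter_union, sdiff_union_self_eq_union, union_eq_left.mpr (subset_univ _)]
  have hcond : ∀ j, (((univ \ B j).filter (fun i => Xs i = x)).card = ζ) ↔ N = ζ + f j := by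
    intro j; have := hsplit j; omega
  have hLHS : (∑ j : Fin n₀,
        (if ((univ \ B j).filter (fun i => Xs i = x)).card = ζ then (1:ℝ) else 0))
      = ((univ.filter (fun j => N = ζ + f j)).card : ℝ) := by
    rw [← Finset.sum_boole]
    exact Finset.sum_congr rfl fun j _ => by simp only [hcond j]
  rw [hLHS]
  set S := univ.filter (fun j => N = ζ + f j) with hS
  have hcardsplit : S.card = (S.filter (fun j => f j = 0)).card
      + (S.filter (fun j => ¬ f j = 0)).card :=
    (card_filter_add_card_filter_not _).symm
  have hA : ((S.filter (fun j => f j = 0)).card : ℝ)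
      ≤ (n₀ : ℝ) * (if N = ζ then (1:ℝ) else 0) := by
    by_cases h : N = ζ
    · simp only [h, if_true, mul_one]
      exact_mod_cast (card_filter_le _ _).trans ((card_filter_le _ _).trans (by simp))
    · have : S.filter (fun j => f j = 0) = ∅ := by
        ext j; simp only [mem_filter, hS, mem_univ, true_and, notMem_empty, iff_false]
        rintro ⟨h1, h2⟩; exact h (by omega)
      simp only [this, card_empty, Nat.cast_zero]
      split_ifs <;> positivity
  have hB : ((S.filter (fun j => ¬ f j = 0)).card : ℝ)
      ≤ ∑ u ∈ Finset.Icc 1 (2 * τ - 1),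
          (if N = ζ + u then (1:ℝ) else 0) * ((ζ + u : ℝ) / u) := by
    have hfib : (S.filter (fun j => ¬ f j = 0)).card
        = ∑ u ∈ Finset.Icc 1 (2 * τ - 1),
            ((S.filter (fun j => ¬ f j = 0)).filter (fun j => f j = u)).card := by
      apply card_eq_sum_card_fiberwise
      intro j hj
      simp only [mem_coe, mem_filter] at hj
      have h1 : 1 ≤ f j := Nat.one_le_iff_ne_zero.mpr hj.2
      have h2 : f j ≤ 2 * τ - 1 := (card_filter_le _ _).trans (hsize j)
      exact mem_Icc.mpr ⟨h1, h2⟩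
    rw [hfib]
    push_cast
    apply Finset.sum_le_sum
    intro u hu
    have hu1 : 1 ≤ u := (mem_Icc.mp hu).1
    set T := (S.filter (fun j => ¬ f j = 0)).filter (fun j => f j = u) with hT
    by_cases h : N = ζ + u
    · simp only [h, if_true, one_mul]
      have hTu : ∀ j ∈ T, f j = u := fun j hj => (mem_filter.mp hj).2
      have hcard : T.card * u ≤ N := by
        calc T.card * u = ∑ j ∈ T, f j := by
              rw [Finset.sum_congr rfl hTu, Finset.sum_const, smul_eq_mul]
          _ ≤ ∑ j, f j := Finset.sum_le_sum_of_subset (subset_univ T)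
          _ = N := hsum
      rw [le_div_iff₀ (by exact_mod_cast hu1 : (0:ℝ) < u)]
      calc (T.card : ℝ) * u ≤ (N : ℝ) := by exact_mod_cast hcard
        _ = (ζ : ℝ) + u := by rw [h]; push_cast; ring
    · have : T = ∅ := by
        ext j
        simp only [hT, mem_filter, hS, mem_univ, true_and, notMem_empty, iff_false]
        rintro ⟨⟨h1, _⟩, h3⟩; exact h (by omega)
      simp only [this, card_empty, Nat.cast_zero]
      split_ifs <;> positivity
  calc (S.card : ℝ) = ((S.filter (fun j => f j = 0)).card : ℝ)
        + ((S.filter (fun j => ¬ f j = 0)).card : ℝ) := by exact_mod_cast hcardsplit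
    _ ≤ _ := by linarith [hA, hB]
end

section
/- Let a finite index set [n] be partitioned into n₀ disjoint blocks B₁,…,B_{n₀}, with holes H_j = [n] \ B_j. Let (X_i) take values in 𝒳, fix x ∈ 𝒳 and ζ ∈ ℕ, and write N_S(x) = #{i ∈ S : X_i = x}, N(x) = N_{[n]}(x). Define P_j = 1{N_{H_j}(x) = ζ} − 1{N(x) = ζ}. Then Σ_{j=1}^{n₀} P_j ≤ ζ + 1. -/
/-!
Let `N` be the number of indices with `X_i = x` and `t_j` the number of those lying in `B_j`, so
that `∑ t_j = N` and `N_{H_j}(x) = N - t_j`. If `N = ζ` every summand is `≤ 0`. Otherwise the sum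
counts the blocks with `N - t_j = ζ`; there are none if `N < ζ`, and if `N > ζ` each of them
carries `t_j = N - ζ ≥ 1` of the `N` indices, so there are at most `N / (N - ζ) ≤ ζ + 1`.
-/

open Finset Function

theorem card_filter_sum_sub_eq_le {κ : Type*} (s : Finset κ) (t : κ → ℕ) {ζ : ℕ}
    (hζ : ∑ k ∈ s, t k ≠ ζ) : #{j ∈ s | ∑ k ∈ s, t k - t j = ζ} ≤ ζ + 1 := by
  set N := ∑ k ∈ s, t k
  rcases hζ.lt_or_gt with hlt | hgt
  · have hempty : {j ∈ s | N - t j = ζ} = ∅ := filter_eq_empty_iff.2 fun j _ => by omega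
    simp [hempty]
  · set K := #{j ∈ s | N - t j = ζ}
    have hfiber : ∀ j ∈ {j ∈ s | N - t j = ζ}, t j = N - ζ := fun j hj => by
      rw [mem_filter] at hj
      have : t j ≤ N := single_le_sum (fun _ _ => Nat.zero_le _) hj.1
      omega
    have hpacked : K * (N - ζ) ≤ N :=
      calc K * (N - ζ) = ∑ j ∈ {j ∈ s | N - t j = ζ}, t j := by
            rw [sum_congr rfl hfiber, sum_const, smul_eq_mul]
        _ ≤ N := sum_le_sum_of_subset (filter_subset _ _)
    have hspread : N ≤ (ζ + 1) * (N - ζ) :=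
      calc N = ζ + (N - ζ) := by omega
        _ ≤ ζ * (N - ζ) + (N - ζ) := by gcongr; exact Nat.le_mul_of_pos_right ζ (by omega)
        _ = (ζ + 1) * (N - ζ) := by ring
    exact Nat.le_of_mul_le_mul_right (hpacked.trans hspread) (by omega)

theorem sum_card_filter_of_partition {ι κ : Type*} [Fintype ι] [DecidableEq ι] [Fintype κ]
    (B : κ → Finset ι) (hdisj : Pairwise (Disjoint on B)) (hcover : ∀ i, ∃ j, i ∈ B j)
    (p : ι → Prop) [DecidablePred p] : ∑ j, #{i ∈ B j | p i} = #{i | p i} := by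
  rw [← card_biUnion fun j _ k _ hjk => disjoint_filter_filter (hdisj hjk)]
  congr 1
  ext i
  simpa using fun _ => hcover i

theorem card_filter_univ_sdiff {ι : Type*} [Fintype ι] [DecidableEq ι] (s : Finset ι)
    (p : ι → Prop) [DecidablePred p] : #{i ∈ univ \ s | p i} = #{i | p i} - #{i ∈ s | p i} := by
  have hsplit : (univ \ s).filter p = univ.filter p \ s.filter p := by
    ext i
    simp only [mem_filter, mem_sdiff, mem_univ, true_and]
    tauto
  rw [hsplit, card_sdiff_of_subset (filter_subset_filter _ (subset_univ s))]

/-- `Σ_j (1{N_{H_j}(x) = ζ} − 1{N(x) = ζ}) ≤ ζ + 1` for holes of a block partition. -/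
theorem stmt12 {ι 𝒳 : Type*} [Fintype ι] [DecidableEq ι] [DecidableEq 𝒳]
    (n₀ : ℕ) (B : Fin n₀ → Finset ι)
    (hdisj : ∀ j k, j ≠ k → Disjoint (B j) (B k))
    (hcover : ∀ i : ι, ∃ j, i ∈ B j)
    (Xs : ι → 𝒳) (x : 𝒳) (ζ : ℕ) :
    (∑ j : Fin n₀,
        ((if ((univ \ B j).filter (fun i => Xs i = x)).card = ζ then (1:ℝ) else 0) -
          (if (univ.filter (fun i => Xs i = x)).card = ζ then (1:ℝ) else 0)))
      ≤ (ζ : ℝ) + 1 := by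
  have hsum : ∑ j, #{i ∈ B j | Xs i = x} = #{i | Xs i = x} :=
    sum_card_filter_of_partition B (fun j k => hdisj j k) hcover _
  simp_rw [card_filter_univ_sdiff, ← hsum]
  by_cases hN : ∑ j, #{i ∈ B j | Xs i = x} = ζ
  · calc _ ≤ (0 : ℝ) := sum_nonpos fun j _ => by rw [if_pos hN]; split_ifs <;> norm_num
      _ ≤ ζ + 1 := by positivity
  · simp only [if_neg hN, sub_zero, sum_boole]
    exact_mod_cast card_filter_sum_sub_eq_le univ _ hN
end
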